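/- arXiv:2303.13697 — 3 statements merged into one kernel-verified Lean document; each statement's English description precedes it below -/
import Mathlib

section
/- Let φ be a set of constraints consisting of linear constraints C and one-hot constraints O, and let rlx(φ) be its convex relaxation (binary constraints b ∈ {0,1} replaced by 0 ≤ b ≤ 1). A solution α is feasible for φ if and only if α is feasible for rlx(φ) and SoI(α) ≤ 0, where SoI(α) = Σ over one-hot groups of (1 - max over the group's variables of α). -/
/-!
A relaxed one-hot group (entries in `[0, 1]` summing to `1`) has maximum at most `1`, so every
term of the SoI is nonnegative and SoI `≤ 0` says that every group attains the value `1`.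
Within a group whose nonnegative entries sum to `1`, an entry equal to `1` forces all the other
entries to vanish, i.e. the group is one-hot; conversely a one-hot group contains a `1`.
-/

open Finset

variable {ι R : Type*} [CommRing R] [LinearOrder R]

def IsOneHot (s : Finset ι) (f : ι → R) : Prop :=
  ∑ x ∈ s, f x = 1 ∧ ∀ x ∈ s, f x = 0 ∨ f x = 1

def IsRelaxedOneHot (s : Finset ι) (f : ι → R) : Prop :=
  ∑ x ∈ s, f x = 1 ∧ ∀ x ∈ s, 0 ≤ f x ∧ f x ≤ 1

theorem IsRelaxedOneHot.sup'_le_one {s : Finset ι} (hs : s.Nonempty) {f : ι → R}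
    (h : IsRelaxedOneHot s f) : s.sup' hs f ≤ 1 :=
  sup'_le hs f fun x hx => (h.2 x hx).2

variable [IsStrictOrderedRing R]

namespace IsOneHot

variable {s : Finset ι} {f : ι → R}

theorem isRelaxedOneHot (h : IsOneHot s f) : IsRelaxedOneHot s f := by
  refine ⟨h.1, fun x hx => ?_⟩
  rcases h.2 x hx with hx0 | hx1 <;> simp [*]

theorem exists_eq_one (h : IsOneHot s f) : ∃ x ∈ s, f x = 1 := by
  by_contra! hne
  have hzero : ∑ x ∈ s, f x = 0 :=
    sum_eq_zero fun x hx => (h.2 x hx).resolve_right (hne x hx)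
  exact zero_ne_one (hzero.symm.trans h.1)

theorem sup'_eq_one (h : IsOneHot s f) (hs : s.Nonempty) : s.sup' hs f = 1 := by
  obtain ⟨x, hx, hx1⟩ := h.exists_eq_one
  exact le_antisymm (h.isRelaxedOneHot.sup'_le_one hs) (hx1 ▸ le_sup' f hx)

end IsOneHot

theorem Finset.forall_eq_zero_or_eq_one_of_one_le_sup' {s : Finset ι} (hs : s.Nonempty)
    {f : ι → R} (hf : ∀ x ∈ s, 0 ≤ f x) (hsum : ∑ x ∈ s, f x = 1) (hsup : 1 ≤ s.sup' hs f) :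
    ∀ x ∈ s, f x = 0 ∨ f x = 1 := by
  classical
  obtain ⟨x₀, hx₀, hx₀_eq⟩ := exists_mem_eq_sup' hs f
  have hx₀_le : f x₀ ≤ 1 := hsum ▸ single_le_sum hf hx₀
  intro x hx
  by_cases hxx₀ : x = x₀
  · exact .inr (hxx₀ ▸ le_antisymm hx₀_le (hx₀_eq ▸ hsup))
  · have hpair : f x + f x₀ ≤ 1 := by
      rw [← sum_pair hxx₀, ← hsum]
      exact sum_le_sum_of_subset_of_nonneg (insert_subset hx (singleton_subset_iff.2 hx₀))
        fun y hy _ => hf y hy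
    exact .inl (le_antisymm (by linarith) (hf x hx))

theorem isOneHot_iff_isRelaxedOneHot_and_sup'_eq_one {s : Finset ι} (hs : s.Nonempty)
    {f : ι → R} : IsOneHot s f ↔ IsRelaxedOneHot s f ∧ s.sup' hs f = 1 :=
  ⟨fun h => ⟨h.isRelaxedOneHot, h.sup'_eq_one hs⟩, fun ⟨h, hsup⟩ =>
    ⟨h.1, forall_eq_zero_or_eq_one_of_one_le_sup' hs (fun x hx => (h.2 x hx).1) h.1 hsup.ge⟩⟩

theorem Fintype.sum_one_sub_nonpos_iff {κ : Type*} [Fintype κ] {g : κ → R}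
    (hg : ∀ k, g k ≤ 1) : ∑ k, (1 - g k) ≤ 0 ↔ ∀ k, g k = 1 := by
  have hnonneg : 0 ≤ fun k => 1 - g k := fun k => sub_nonneg.2 (hg k)
  rw [(Fintype.sum_nonneg hnonneg).ge_iff_eq', Fintype.sum_eq_zero_iff_of_nonneg hnonneg]
  exact funext_iff.trans (forall_congr' fun k => sub_eq_zero.trans eq_comm)

/-- a solution α is feasible for φ = C ∪ O (linear constraints plus
one-hot constraints over groups G k) iff α is feasible for the convex relaxation
rlx(φ) and SoI(α) ≤ 0. -/
theorem feasible_iff_relaxed_and_soi_le_zero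
    (n K : ℕ) (Clin : (Fin n → ℝ) → Prop)
    (G : Fin K → Finset (Fin n)) (hG : ∀ k, (G k).Nonempty)
    (α : Fin n → ℝ) :
    (Clin α ∧ ∀ k, (∑ x ∈ G k, α x = 1 ∧ ∀ x ∈ G k, α x = 0 ∨ α x = 1)) ↔
      ((Clin α ∧ ∀ k, (∑ x ∈ G k, α x = 1 ∧ ∀ x ∈ G k, 0 ≤ α x ∧ α x ≤ 1)) ∧
        ∑ k, (1 - (G k).sup' (hG k) α) ≤ 0) := by
  have hsoi (hrel : ∀ k, IsRelaxedOneHot (G k) α) :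
      ∑ k, (1 - (G k).sup' (hG k) α) ≤ 0 ↔ ∀ k, (G k).sup' (hG k) α = 1 :=
    Fintype.sum_one_sub_nonpos_iff fun k => (hrel k).sup'_le_one (hG k)
  constructor
  · rintro ⟨hC, hhot⟩
    have hrel k := (isOneHot_iff_isRelaxedOneHot_and_sup'_eq_one (hG k)).1 (hhot k)
    exact ⟨⟨hC, fun k => (hrel k).1⟩, (hsoi fun k => (hrel k).1).2 fun k => (hrel k).2⟩
  · rintro ⟨⟨hC, hrel⟩, hle⟩
    exact ⟨hC, fun k =>
      (isOneHot_iff_isRelaxedOneHot_and_sup'_eq_one (hG k)).2 ⟨hrel k, (hsoi hrel).1 hle k⟩⟩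
end

section
/- Let φ be a set of linear and one-hot constraints with a nonempty, compact relaxed feasible region. Then φ is feasible if and only if there exists a mode sequence f (a choice of one index per one-hot group) such that the minimum of the linear function f over rlx(φ) equals 0. -/
/-! On the relaxed region every term `1 - x k (j k)` is nonnegative, so cost `0` forces
`x k (j k) = 1` in each group, and the simplex constraint then makes every group one-hot.
Conversely, the positions of the ones in a feasible point form a mode sequence of cost `0`. -/

open Finset

section OneHot

variable {ι : Type*} [Fintype ι] {p : ι → ℝ}

lemma exists_eq_one_of_sum_eq_one_of_forall_eq_zero_or_eq_one (hsum : ∑ i, p i = 1)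
    (h01 : ∀ i, p i = 0 ∨ p i = 1) : ∃ i, p i = 1 := by
  obtain ⟨i, -, hi⟩ := exists_ne_zero_of_sum_ne_zero (s := univ) (f := p) (by simp [hsum])
  exact ⟨i, (h01 i).resolve_left hi⟩

lemma eq_zero_of_sum_eq_one_of_apply_eq_one (hsum : ∑ i, p i = 1) (hp : ∀ i, 0 ≤ p i)
    {i j : ι} (hj : p j = 1) (hij : i ≠ j) : p i = 0 := by
  classical
  have hpair : p i + p j ≤ ∑ i, p i := by
    rw [← sum_pair hij]
    exact sum_le_sum_of_subset_of_nonneg (subset_univ _) fun k _ _ => hp k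
  linarith [hp i]

end OneHot

section ModeCost

variable {κ : Type*} [Fintype κ] {ι : κ → Type*} {x : (k : κ) → ι k → ℝ} {j : (k : κ) → ι k}

lemma sum_one_sub_apply_nonneg (hx : ∀ k i, x k i ≤ 1) : 0 ≤ ∑ k, (1 - x k (j k)) :=
  sum_nonneg fun k _ => sub_nonneg.mpr (hx k (j k))

lemma apply_eq_one_of_sum_one_sub_apply_eq_zero (hx : ∀ k i, x k i ≤ 1)
    (hzero : ∑ k, (1 - x k (j k)) = 0) (k : κ) : x k (j k) = 1 := by
  have := (sum_eq_zero_iff_of_nonneg fun k _ => sub_nonneg.mpr (hx k (j k))).mp hzero k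
    (mem_univ k)
  linarith

end ModeCost

theorem feasible_iff_exists_zero_cost_mode_sequence_general
    (K : ℕ) (m : Fin K → ℕ)
    (Clin : ((k : Fin K) → Fin (m k) → ℝ) → Prop)
    (S : Set ((k : Fin K) → Fin (m k) → ℝ))
    (hS : S = {x | Clin x ∧ ∀ k, (∑ i, x k i = 1 ∧ ∀ i, 0 ≤ x k i ∧ x k i ≤ 1)}) :
    (∃ x, Clin x ∧ ∀ k, (∑ i, x k i = 1 ∧ ∀ i, x k i = 0 ∨ x k i = 1)) ↔
      ∃ j : (k : Fin K) → Fin (m k),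
        IsLeast ((fun x : (k : Fin K) → Fin (m k) → ℝ =>
          ∑ k, (1 - x k (j k))) '' S) 0 := by
  subst hS
  constructor
  · rintro ⟨x, hlin, hx⟩
    choose j hj using fun k => exists_eq_one_of_sum_eq_one_of_forall_eq_zero_or_eq_one
      (hx k).1 (hx k).2
    have hbox : ∀ k i, 0 ≤ x k i ∧ x k i ≤ 1 := fun k i => by
      rcases (hx k).2 i with h | h <;> simp [h]
    refine ⟨j, ⟨x, ⟨hlin, fun k => ⟨(hx k).1, hbox k⟩⟩, by simp [hj]⟩, ?_⟩
    rintro _ ⟨y, ⟨-, hy⟩, rfl⟩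
    exact sum_one_sub_apply_nonneg fun k i => ((hy k).2 i).2
  · rintro ⟨j, ⟨y, ⟨hlin, hy⟩, hzero⟩, -⟩
    have hj := apply_eq_one_of_sum_one_sub_apply_eq_zero (fun k i => ((hy k).2 i).2) hzero
    refine ⟨y, hlin, fun k => ⟨(hy k).1, fun i => ?_⟩⟩
    by_cases hij : i = j k
    · exact Or.inr (hij ▸ hj k)
    · exact Or.inl (eq_zero_of_sum_eq_one_of_apply_eq_one (hy k).1
        (fun i => ((hy k).2 i).1) (hj k) hij)

/-- for φ consisting of linear constraints and one-hot constraints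
with nonempty compact relaxed feasible region S, φ is feasible iff there is a
mode sequence j whose linear objective has minimum 0 over S. -/
theorem feasible_iff_exists_zero_cost_mode_sequence
    (K : ℕ) (m : Fin K → ℕ) (hm : ∀ k, 0 < m k)
    (Clin : ((k : Fin K) → Fin (m k) → ℝ) → Prop)
    (S : Set ((k : Fin K) → Fin (m k) → ℝ))
    (hS : S = {x | Clin x ∧ ∀ k, (∑ i, x k i = 1 ∧ ∀ i, 0 ≤ x k i ∧ x k i ≤ 1)})
    (hcompact : IsCompact S) (hne : S.Nonempty) :
    (∃ x, Clin x ∧ ∀ k, (∑ i, x k i = 1 ∧ ∀ i, x k i = 0 ∨ x k i = 1)) ↔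
      ∃ j : (k : Fin K) → Fin (m k),
        IsLeast ((fun x : (k : Fin K) → Fin (m k) → ℝ =>
          ∑ k, (1 - x k (j k))) '' S) 0 :=
  feasible_iff_exists_zero_cost_mode_sequence_general K m Clin S hS
end

section
/- Let α be a point in the relaxed feasible region of φ (linear plus relaxed one-hot constraints) with SoI(α) = 0 for the SoI function defined as the sum of per-group violations. Then α satisfies all binary constraints b ∈ {0,1} of φ, and moreover α is feasible for the precise problem φ. -/
/-! A nonnegative sum equals zero only if every summand does; each summand `1 - max` of SoI is
nonnegative because the relaxed variables lie in `[0, 1]`, so SoI(α) = 0 forces every group to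
contain a variable of value `1`. Since the group sums to `1` and its entries are nonnegative, all
other entries of the group vanish. -/

open Finset

theorem Finset.eq_zero_of_apply_eq_sum {ι M : Type*} [AddCommGroup M] [PartialOrder M]
    [IsOrderedAddMonoid M] {s : Finset ι} {f : ι → M} (hf : ∀ x ∈ s, 0 ≤ f x)
    {x₀ : ι} (hx₀ : x₀ ∈ s) (hsum : f x₀ = ∑ x ∈ s, f x) :
    ∀ x ∈ s, x ≠ x₀ → f x = 0 := by
  classical
  have hrest : ∑ x ∈ s.erase x₀, f x = 0 := by
    rw [sum_erase_eq_sub hx₀, ← hsum, sub_self]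
  intro x hx hne
  exact (sum_eq_zero_iff_of_nonneg fun y hy => hf y (mem_of_mem_erase hy)).mp hrest x
    (mem_erase.mpr ⟨hne, hx⟩)

theorem Finset.eq_zero_or_eq_one_of_sum_eq_one_of_sup'_eq_one {ι : Type*} {s : Finset ι}
    (hs : s.Nonempty) {f : ι → ℝ} (hf : ∀ x ∈ s, 0 ≤ f x) (hsum : ∑ x ∈ s, f x = 1)
    (hsup : s.sup' hs f = 1) : ∀ x ∈ s, f x = 0 ∨ f x = 1 := by
  obtain ⟨x₀, hx₀, hfx₀⟩ := exists_mem_eq_sup' hs f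
  rw [hsup] at hfx₀
  intro x hx
  by_cases hxx₀ : x = x₀
  · exact Or.inr (hxx₀ ▸ hfx₀.symm)
  · exact Or.inl (eq_zero_of_apply_eq_sum hf hx₀ (hfx₀ ▸ hsum.symm) x hx hxx₀)

theorem Finset.sup'_eq_of_sum_sub_sup'_eq_zero {ι κ : Type*} {t : Finset κ} {G : κ → Finset ι}
    (hG : ∀ k, (G k).Nonempty) {f : ι → ℝ} {c : ℝ} (hle : ∀ k ∈ t, ∀ x ∈ G k, f x ≤ c)
    (hzero : ∑ k ∈ t, (c - (G k).sup' (hG k) f) = 0) : ∀ k ∈ t, (G k).sup' (hG k) f = c := by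
  have hnonneg : ∀ k ∈ t, 0 ≤ c - (G k).sup' (hG k) f := fun k hk =>
    sub_nonneg.mpr ((sup'_le_iff _ _).mpr (hle k hk))
  intro k hk
  exact (sub_eq_zero.mp ((sum_eq_zero_iff_of_nonneg hnonneg).mp hzero k hk)).symm

/-- if α lies in the relaxed feasible region of φ and SoI(α) = 0,
then α satisfies all binary constraints of φ, and α is feasible for φ. -/
theorem soi_zero_implies_feasible
    (n K : ℕ) (Clin : (Fin n → ℝ) → Prop)
    (G : Fin K → Finset (Fin n)) (hG : ∀ k, (G k).Nonempty)
    (α : Fin n → ℝ)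
    (hrlx : Clin α ∧ ∀ k, (∑ x ∈ G k, α x = 1 ∧ ∀ x ∈ G k, 0 ≤ α x ∧ α x ≤ 1))
    (hsoi : ∑ k, (1 - (G k).sup' (hG k) α) = 0) :
    (∀ k, ∀ x ∈ G k, α x = 0 ∨ α x = 1) ∧
    (Clin α ∧ ∀ k, (∑ x ∈ G k, α x = 1 ∧ ∀ x ∈ G k, α x = 0 ∨ α x = 1)) := by
  obtain ⟨hClin, hgroup⟩ := hrlx
  have hsup : ∀ k, (G k).sup' (hG k) α = 1 := fun k =>
    sup'_eq_of_sum_sub_sup'_eq_zero hG (fun k _ x hx => ((hgroup k).2 x hx).2) hsoi k (mem_univ k)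
  have hbin : ∀ k, ∀ x ∈ G k, α x = 0 ∨ α x = 1 := fun k =>
    eq_zero_or_eq_one_of_sum_eq_one_of_sup'_eq_one (hG k) (fun x hx => ((hgroup k).2 x hx).1)
      (hgroup k).1 (hsup k)
  exact ⟨hbin, hClin, fun k => ⟨(hgroup k).1, hbin k⟩⟩
end
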